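/- arXiv:1403.7495 — 2 statements merged into one kernel-verified Lean document; each statement's English description precedes it below -/
import Mathlib

section
/- The Petersen graph does not admit a (1,1,2,3)-packing coloring, i.e. its vertex set cannot be partitioned into two independent sets, one 2-packing, and one 3-packing. -/
/-- An `S`-packing coloring: a map `c : V → Fin k` such that any two distinct
vertices with the same color `i` are at distance greater than `s i`. -/
def SPacking {V : Type*} (G : SimpleGraph V) (k : ℕ) (s : Fin k → ℕ) : Prop :=
  ∃ c : V → Fin k, ∀ u v : V, u ≠ v → c u = c v → G.Reachable u v → s (c u) < G.dist u v

/-- The subdivision of `G`: each edge is replaced by a path of length two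
through a new (subdivision) vertex. -/
def Subdiv {V : Type*} (G : SimpleGraph V) : SimpleGraph (V ⊕ G.edgeSet) :=
  SimpleGraph.fromRel (fun a b => ∃ (v : V) (e : G.edgeSet),
    a = Sum.inl v ∧ b = Sum.inr e ∧ v ∈ (e : Sym2 V))

/-- The Petersen graph as the Kneser graph K(5,2). -/
def Petersen : SimpleGraph {s : Finset (Fin 5) // s.card = 2} where
  Adj a b := Disjoint (a : Finset (Fin 5)) (b : Finset (Fin 5))
  symm := ⟨fun a b h => h.symm⟩
  loopless := ⟨fun a h => by
    have h1 := disjoint_self.mp h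
    have h2 := a.2
    simp [h1] at h2⟩

/-!
The Petersen graph has diameter 2, so the classes of colours 2 and 3 have at most one vertex each
and the two independent classes together cover at least 8 of the 10 vertices. An independent set
of K(5,2) is an intersecting family of pairs, and one with four members is a full star
`{ij | j ≠ i}`. Hence both independent classes are stars, but any two stars share a vertex.
-/

def IsSPackingColoring {V : Type*} (G : SimpleGraph V) {k : ℕ} (s : Fin k → ℕ) (c : V → Fin k) :
    Prop :=
  ∀ u v : V, u ≠ v → c u = c v → G.Reachable u v → s (c u) < G.dist u v

namespace IsSPackingColoring

variable {V : Type*} {G : SimpleGraph V} {k : ℕ} {s : Fin k → ℕ} {c : V → Fin k}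

lemma isIndepSet_colorClass (hc : IsSPackingColoring G s c) {i : Fin k} (hi : 1 ≤ s i) :
    G.IsIndepSet {v | c v = i} := by
  intro u (hu : c u = i) v (hv : c v = i) huv hadj
  have := hc u v huv (hu.trans hv.symm) hadj.reachable
  rw [hu, SimpleGraph.dist_eq_one_iff_adj.mpr hadj] at this
  omega

lemma subsingleton_colorClass (hc : IsSPackingColoring G s c) (hG : G.Connected) {i : Fin k}
    (hi : ∀ u v, G.dist u v ≤ s i) : {v | c v = i}.Subsingleton := by
  intro u (hu : c u = i) v (hv : c v = i)
  by_contra huv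
  have := hc u v huv (hu.trans hv.symm) (hG u v)
  rw [hu] at this
  exact (hi u v).not_gt this

end IsSPackingColoring

namespace Petersen

open Finset

abbrev Vertex : Type := {s : Finset (Fin 5) // s.card = 2}

instance : DecidableRel Petersen.Adj := fun a b =>
  inferInstanceAs (Decidable (Disjoint (a : Finset (Fin 5)) b))

def star (i : Fin 5) : Finset Vertex := {v | i ∈ v.1}

lemma card_star (i : Fin 5) : #(star i) = 4 := by
  revert i; decide

lemma star_inter_star_nonempty (i j : Fin 5) : (star i ∩ star j).Nonempty := by
  revert i j; decide

lemma adj_or_exists_adj_adj :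
    ∀ u v : Vertex, u ≠ v → Petersen.Adj u v ∨ ∃ w, Petersen.Adj u w ∧ Petersen.Adj w v := by
  decide

lemma reachable_and_dist_le_two (u v : Vertex) :
    Petersen.Reachable u v ∧ Petersen.dist u v ≤ 2 := by
  rcases eq_or_ne u v with rfl | huv
  · simp
  rcases adj_or_exists_adj_adj u v huv with huv | ⟨w, huw, hwv⟩
  · exact ⟨huv.reachable, (SimpleGraph.dist_eq_one_iff_adj.mpr huv).trans_le one_le_two⟩
  · exact ⟨huw.reachable.trans hwv.reachable, SimpleGraph.dist_le (.cons huw (.cons hwv .nil))⟩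

lemma connected : Petersen.Connected :=
  have : Nonempty Vertex := ⟨⟨{0, 1}, rfl⟩⟩
  ⟨fun u v => (reachable_and_dist_le_two u v).1⟩

lemma dist_le_two (u v : Vertex) : Petersen.dist u v ≤ 2 :=
  (reachable_and_dist_le_two u v).2

lemma exists_subset_star_of_isIndepSet :
    ∀ t : Finset Vertex, Petersen.IsIndepSet (t : Set Vertex) → 4 ≤ #t → ∃ i, t ⊆ star i := by
  decide +kernel

lemma eq_star_of_isIndepSet {t : Finset Vertex} (ht : Petersen.IsIndepSet (t : Set Vertex))
    (h4 : 4 ≤ #t) : ∃ i, t = star i := by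
  obtain ⟨i, hi⟩ := exists_subset_star_of_isIndepSet t ht h4
  exact ⟨i, eq_of_subset_of_card_le hi (card_star i ▸ h4)⟩

lemma card_le_four_of_isIndepSet {t : Finset Vertex} (ht : Petersen.IsIndepSet (t : Set Vertex)) :
    #t ≤ 4 := by
  by_contra! h
  obtain ⟨i, rfl⟩ := eq_star_of_isIndepSet ht h.le
  exact h.ne' (card_star i)

end Petersen

open Finset in
theorem stmt_6 : ¬ SPacking Petersen 4 ![1, 1, 2, 3] := by
  rintro ⟨c, hc : IsSPackingColoring Petersen _ c⟩
  let C (i : Fin 4) : Finset Petersen.Vertex := {v | c v = i}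
  have indep_C (i : Fin 4) (hi : i = 0 ∨ i = 1) : Petersen.IsIndepSet (C i : Set _) := by
    rw [coe_filter_univ]
    exact hc.isIndepSet_colorClass (by rcases hi with rfl | rfl <;> decide)
  have card_C_le_one (i : Fin 4) (hi : i = 2 ∨ i = 3) : #(C i) ≤ 1 := by
    rw [card_le_one_iff_subsingleton, coe_filter_univ]
    refine hc.subsingleton_colorClass Petersen.connected fun u v => ?_
    exact (Petersen.dist_le_two u v).trans (by rcases hi with rfl | rfl <;> decide)
  have card_sum : #(C 0) + #(C 1) + #(C 2) + #(C 3) = 10 := by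
    rw [← Fin.sum_univ_four (f := fun i => #(C i)),
      ← card_eq_sum_card_fiberwise (fun _ _ => mem_univ _)]
    rfl
  have := Petersen.card_le_four_of_isIndepSet (indep_C 0 (.inl rfl))
  have := Petersen.card_le_four_of_isIndepSet (indep_C 1 (.inr rfl))
  have := card_C_le_one 2 (.inl rfl)
  have := card_C_le_one 3 (.inr rfl)
  obtain ⟨i, hi⟩ := Petersen.eq_star_of_isIndepSet (indep_C 0 (.inl rfl)) (by omega)
  obtain ⟨j, hj⟩ := Petersen.eq_star_of_isIndepSet (indep_C 1 (.inr rfl)) (by omega)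
  obtain ⟨v, hv⟩ := Petersen.star_inter_star_nonempty i j
  rw [← hi, ← hj, mem_inter, mem_filter_univ, mem_filter_univ] at hv
  exact absurd (hv.1.symm.trans hv.2) (by decide)
end

section
/- For every graph G with minimum degree at least 3, if the subdivision S(G) admits a (1,2,2)-packing coloring then G is bipartite. -/
/-!
A vertex of colour `0` (the independent-set colour) can have at most two neighbours: they
all carry one of the two `2`-packing colours, and two of them sharing a colour would be at
distance `2`. In `S(G)` every original vertex has degree at least `3`, so all of them carry
`2`-packing colours; the ends of an edge of `G` are at distance `2` in `S(G)`, so these two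
colours properly colour `G`.
-/

open SimpleGraph

section PackingColoring

variable {V : Type*} {G : SimpleGraph V}

def IsPackingColoring {k : ℕ} (G : SimpleGraph V) (s : Fin k → ℕ) (c : V → Fin k) : Prop :=
  ∀ u v : V, u ≠ v → c u = c v → G.Reachable u v → s (c u) < G.dist u v

theorem IsPackingColoring.ne_of_walk {k : ℕ} {s : Fin k → ℕ} {c : V → Fin k}
    (hc : IsPackingColoring G s c) {u v : V} (huv : u ≠ v) (p : G.Walk u v)
    (hp : p.length ≤ s (c u)) : c u ≠ c v := fun h =>
  (hc u v huv h p.reachable).not_ge ((G.dist_le p).trans hp)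

variable {c : V → Fin 3} (hc : IsPackingColoring G ![1, 2, 2] c)
include hc

theorem IsPackingColoring.ne_of_adj_of_adj {u v w : V} (huv : G.Adj u v) (hvw : G.Adj v w)
    (huw : u ≠ w) (hu : c u ≠ 0) : c u ≠ c w :=
  hc.ne_of_walk huw (.cons huv hvw.toWalk) <| by
    change 2 ≤ _; generalize c u = i at hu; revert i; decide

theorem IsPackingColoring.card_le_two_of_eq_zero {ι : Type*} [Fintype ι] {v : V} {f : ι → V}
    (hf : Function.Injective f) (hadj : ∀ i, G.Adj v (f i)) (hv : c v = 0) :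
    Fintype.card ι ≤ 2 := by
  have hf0 (i : ι) : c (f i) ≠ 0 := fun h =>
    hc.ne_of_walk (hadj i).ne (hadj i).toWalk (by simp [hv]) (hv.trans h.symm)
  have hinj : Function.Injective fun i => (⟨c (f i), hf0 i⟩ : {j : Fin 3 // j ≠ 0}) :=
    fun i j hij => by_contra fun hne =>
      hc.ne_of_adj_of_adj (hadj i).symm (hadj j) (hf.ne hne) (hf0 i) (congrArg Subtype.val hij)
  simpa using Fintype.card_le_of_injective _ hinj

end PackingColoring

namespace Subdiv

variable {V : Type*} {G : SimpleGraph V}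

theorem adj_inl_inr {v : V} {e : G.edgeSet} (hv : v ∈ (e : Sym2 V)) :
    (Subdiv G).Adj (.inl v) (.inr e) :=
  ⟨by simp, Or.inl ⟨v, e, rfl, rfl, hv⟩⟩

theorem adj_inl_inr_mk_left {u v : V} (huv : G.Adj u v) :
    (Subdiv G).Adj (.inl u) (.inr ⟨s(u, v), huv⟩) :=
  adj_inl_inr (Sym2.mem_mk_left u v)

theorem adj_inl_inr_mk_right {u v : V} (huv : G.Adj u v) :
    (Subdiv G).Adj (.inl v) (.inr ⟨s(u, v), huv⟩) :=
  adj_inl_inr (Sym2.mem_mk_right u v)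

variable {c : V ⊕ G.edgeSet → Fin 3} (hc : IsPackingColoring (Subdiv G) ![1, 2, 2] c)
include hc

theorem degree_le_two_of_eq_zero {v : V} [Fintype (G.neighborSet v)] (hv : c (.inl v) = 0) :
    G.degree v ≤ 2 := by
  have hinj : Function.Injective fun w : G.neighborSet v =>
      (.inr ⟨s(v, w), w.2⟩ : V ⊕ G.edgeSet) :=
    fun w w' h => Subtype.ext <| Sym2.congr_right.mp <| congrArg Subtype.val (Sum.inr_injective h)
  rw [← card_neighborSet_eq_degree]
  exact hc.card_le_two_of_eq_zero hinj (fun w => adj_inl_inr_mk_left w.2) hv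

theorem ne_of_adj {u v : V} (huv : G.Adj u v) (hu : c (.inl u) ≠ 0) :
    c (.inl u) ≠ c (.inl v) :=
  hc.ne_of_adj_of_adj (adj_inl_inr_mk_left huv) (adj_inl_inr_mk_right huv).symm
    (by simpa using huv.ne) hu

end Subdiv

theorem stmt_12 {V : Type*} [Fintype V] (G : SimpleGraph V) [DecidableRel G.Adj]
    (hmin : ∀ v, 3 ≤ G.degree v) (h : SPacking (Subdiv G) 3 ![1, 2, 2]) :
    G.Colorable 2 := by
  obtain ⟨c, hc : IsPackingColoring _ _ c⟩ := h
  have hc0 (v : V) : c (.inl v) ≠ 0 := fun h0 =>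
    (Subdiv.degree_le_two_of_eq_zero hc h0).not_gt (hmin v)
  let C : G.Coloring {i : Fin 3 // i ≠ 0} := Coloring.mk (fun v => ⟨c (.inl v), hc0 v⟩)
    fun huv h => Subdiv.ne_of_adj hc huv (hc0 _) (congrArg Subtype.val h)
  simpa using C.colorable
end
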